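/- Assume X X^T is invertible and let W be a critical point of L^1 restricted to M_k of the form W = ∑_{j∈J} σ_j u_j v_j^T (X X^T)^{-1/2} where J ⊆ {1,...,q}, |J| = k, and there exist indices j_0 ∈ J and j_1 ∉ J with σ_{j_1} > σ_{j_0}. Define the curve γ(t) = (σ_{j_0} u_{j_0}(t) v_{j_0}(t)^T + ∑_{j∈J, j≠j_0} σ_j u_j v_j^T)(X X^T)^{-1/2} with u_{j_0}(t) = t u_{j_1} + √(1-t²) u_{j_0} and v_{j_0}(t) = t v_{j_1} + √(1-t²) v_{j_0}. Then d²/dt² L^1(γ(t)) at t = 0 equals 2 σ_{j_0}(σ_{j_0} - σ_{j_1}) < 0. -/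
import Mathlib

open Matrix

/-- The principal real power of a positive semidefinite (here: Hermitian) real matrix,
defined through its spectral decomposition: A^r = U diag(λᵢ^r) Uᵀ. -/
noncomputable def psdRpow {n : ℕ} {A : Matrix (Fin n) (Fin n) ℝ} (hA : A.IsHermitian) (r : ℝ) :
    Matrix (Fin n) (Fin n) ℝ :=
  (hA.eigenvectorUnitary : Matrix (Fin n) (Fin n) ℝ) *
    Matrix.diagonal (fun i => (hA.eigenvalues i) ^ r) *
    (star (hA.eigenvectorUnitary : Matrix (Fin n) (Fin n) ℝ))

/-- The loss L¹(W) = (1/2)‖Y - W X‖_F² written via the trace. -/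
noncomputable def L1 {dx dy m : ℕ} (X : Matrix (Fin dx) (Fin m) ℝ)
    (Y : Matrix (Fin dy) (Fin m) ℝ) (W : Matrix (Fin dy) (Fin dx) ℝ) : ℝ :=
  (1 / 2) * Matrix.trace ((Y - W * X) * (Y - W * X)ᵀ)

section Helpers

lemma psdRpow_transpose {n : ℕ} {A : Matrix (Fin n) (Fin n) ℝ} (hA : A.IsHermitian) (r : ℝ) :
    (psdRpow hA r)ᵀ = psdRpow hA r := by
  have h : ∀ M : Matrix (Fin n) (Fin n) ℝ, star M = Mᵀ := fun M => rfl
  simp [psdRpow, transpose_mul, h, Matrix.mul_assoc]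

lemma psdRpow_mul_mul {n : ℕ} {A : Matrix (Fin n) (Fin n) ℝ} (hA : A.PosDef) :
    psdRpow hA.1 (-(1/2)) * A * psdRpow hA.1 (-(1/2)) = 1 := by
  set V : Matrix (Fin n) (Fin n) ℝ := (hA.1.eigenvectorUnitary : Matrix (Fin n) (Fin n) ℝ)
  have hVsV : star V * V = 1 := (Matrix.mem_unitaryGroup_iff').mp (hA.1.eigenvectorUnitary).2
  have hVVs : V * star V = 1 := (Matrix.mem_unitaryGroup_iff).mp (hA.1.eigenvectorUnitary).2
  have hspec : A = V * diagonal (RCLike.ofReal ∘ hA.1.eigenvalues) * star V := hA.1.spectral_theorem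
  rw [psdRpow]
  calc (V * diagonal (fun i => (hA.1.eigenvalues i) ^ (-(1/2):ℝ)) * star V) * A *
        (V * diagonal (fun i => (hA.1.eigenvalues i) ^ (-(1/2):ℝ)) * star V)
      = V * diagonal (fun i => (hA.1.eigenvalues i) ^ (-(1/2):ℝ)) * star V *
        (V * diagonal (RCLike.ofReal ∘ hA.1.eigenvalues) * star V) *
        (V * diagonal (fun i => (hA.1.eigenvalues i) ^ (-(1/2):ℝ)) * star V) := by
        rw [← hspec]
    _ = V * (diagonal (fun i => (hA.1.eigenvalues i) ^ (-(1/2):ℝ)) *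
          diagonal (RCLike.ofReal ∘ hA.1.eigenvalues) *
          diagonal (fun i => (hA.1.eigenvalues i) ^ (-(1/2):ℝ))) * star V := by
        simp only [Matrix.mul_assoc]
        rw [← Matrix.mul_assoc (star V) V, hVsV, Matrix.one_mul]
        rw [← Matrix.mul_assoc (star V) V, hVsV, Matrix.one_mul]
    _ = 1 := by
        have : (diagonal (fun i => (hA.1.eigenvalues i) ^ (-(1/2):ℝ)) *
          diagonal (RCLike.ofReal ∘ hA.1.eigenvalues) *
          diagonal (fun i => (hA.1.eigenvalues i) ^ (-(1/2):ℝ))) = (1 : Matrix (Fin n) (Fin n) ℝ) := by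
          rw [diagonal_mul_diagonal, diagonal_mul_diagonal]
          have hval : ∀ i : Fin n, (hA.1.eigenvalues i) ^ (-(1/2):ℝ) *
              ((RCLike.ofReal ∘ hA.1.eigenvalues) i) * (hA.1.eigenvalues i) ^ (-(1/2):ℝ) = 1 := by
            intro i
            have hpos := hA.eigenvalues_pos i
            have h1 : (RCLike.ofReal ∘ hA.1.eigenvalues) i = hA.1.eigenvalues i := rfl
            have h2 : (hA.1.eigenvalues i) ^ (-(1/2):ℝ) * (hA.1.eigenvalues i) ^ (-(1/2):ℝ)
                = (hA.1.eigenvalues i)⁻¹ := by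
              rw [← Real.rpow_add hpos]
              norm_num [Real.rpow_neg_one]
            calc (hA.1.eigenvalues i) ^ (-(1/2):ℝ) * ((RCLike.ofReal ∘ hA.1.eigenvalues) i) *
                  (hA.1.eigenvalues i) ^ (-(1/2):ℝ)
                = hA.1.eigenvalues i * ((hA.1.eigenvalues i) ^ (-(1/2):ℝ) *
                  (hA.1.eigenvalues i) ^ (-(1/2):ℝ)) := by rw [h1]; ring
              _ = 1 := by rw [h2]; exact mul_inv_cancel₀ hpos.ne'
          have hfun : (fun i => (hA.1.eigenvalues i) ^ (-(1/2):ℝ) *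
              (RCLike.ofReal ∘ hA.1.eigenvalues) i *
              (hA.1.eigenvalues i) ^ (-(1/2):ℝ)) = (1 : Fin n → ℝ) :=
            funext fun i => hval i
          rw [hfun]; exact Matrix.diagonal_one
        rw [this, Matrix.mul_one, hVVs]

lemma trace_vmv_mul_vmv_t {n p : ℕ} (a c : Fin n → ℝ) (b d : Fin p → ℝ) :
    trace (vecMulVec a b * (vecMulVec c d)ᵀ) = (a ⬝ᵥ c) * (b ⬝ᵥ d) := by
  simp [trace, vecMulVec_apply, mul_apply, dotProduct, diag, Finset.mul_sum, Finset.sum_mul]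
  rw [Finset.sum_comm]
  congr 1; ext i; congr 1; ext j; ring

lemma trace_sum_mul_sum {n p : ℕ} {ι κ : Type*} (s : Finset ι) (r : Finset κ)
    (c : ι → ℝ) (d : κ → ℝ) (a : ι → Fin n → ℝ) (b : ι → Fin p → ℝ)
    (a' : κ → Fin n → ℝ) (b' : κ → Fin p → ℝ) :
    trace ((∑ i ∈ s, c i • vecMulVec (a i) (b i)) * (∑ j ∈ r, d j • vecMulVec (a' j) (b' j))ᵀ)
      = ∑ i ∈ s, ∑ j ∈ r, c i * d j * ((a i ⬝ᵥ a' j) * (b i ⬝ᵥ b' j)) := by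
  rw [Matrix.sum_mul, Matrix.trace_sum]
  refine Finset.sum_congr rfl fun i _ => ?_
  rw [Matrix.transpose_sum, Matrix.mul_sum, Matrix.trace_sum]
  refine Finset.sum_congr rfl fun j _ => ?_
  rw [Matrix.transpose_smul, Matrix.smul_mul, Matrix.mul_smul, Matrix.trace_smul,
    Matrix.trace_smul, smul_eq_mul, smul_eq_mul, trace_vmv_mul_vmv_t]
  ring

lemma L1_expand {dx dy m : ℕ} (X : Matrix (Fin dx) (Fin m) ℝ)
    (Y : Matrix (Fin dy) (Fin m) ℝ) (W : Matrix (Fin dy) (Fin dx) ℝ) :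
    L1 X Y W = (1/2) * trace (Y * Yᵀ) - trace (W * X * Yᵀ)
      + (1/2) * trace (W * X * Xᵀ * Wᵀ) := by
  have h : trace (Y * (W * X)ᵀ) = trace (W * X * Yᵀ) := by
    rw [← Matrix.trace_transpose (Y * (W * X)ᵀ), Matrix.transpose_mul, Matrix.transpose_transpose]
  rw [L1]
  rw [Matrix.transpose_sub, Matrix.sub_mul, Matrix.mul_sub, Matrix.mul_sub,
    Matrix.trace_sub, Matrix.trace_sub, Matrix.trace_sub, h]
  have h2 : W * X * (W * X)ᵀ = W * X * Xᵀ * Wᵀ := by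
    rw [Matrix.transpose_mul, Matrix.mul_assoc, Matrix.mul_assoc, Matrix.mul_assoc]
  rw [h2]
  ring

end Helpers

set_option maxHeartbeats 2000000 in
/-- At a non-optimal critical point W = ∑_{j∈J} σ_j u_j v_jᵀ (X Xᵀ)^{-1/2} (with j₀ ∈ J,
j₁ ∉ J, σ_{j₁} > σ_{j₀}), the second derivative of L¹ along the curve γ obtained by
rotating (u_{j₀}, v_{j₀}) towards (u_{j₁}, v_{j₁}) equals 2 σ_{j₀}(σ_{j₀} - σ_{j₁}) < 0
at t = 0. -/
theorem stmt14 {dx dy m q k : ℕ}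
    (X : Matrix (Fin dx) (Fin m) ℝ) (Y : Matrix (Fin dy) (Fin m) ℝ)
    (hX : (X * Xᵀ).PosDef)
    (σ : Fin q → ℝ) (u : Fin q → Fin dy → ℝ) (v : Fin q → Fin dx → ℝ)
    (hσpos : ∀ i, 0 < σ i) (hσmono : Antitone σ)
    (hu : ∀ i j, u i ⬝ᵥ u j = if i = j then (1 : ℝ) else 0)
    (hv : ∀ i j, v i ⬝ᵥ v j = if i = j then (1 : ℝ) else 0)
    (hQ : Y * Xᵀ * psdRpow hX.1 (-(1 / 2)) =
      ∑ i : Fin q, σ i • Matrix.vecMulVec (u i) (v i))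
    (J : Finset (Fin q)) (hJ : J.card = k)
    (j0 j1 : Fin q) (hj0 : j0 ∈ J) (hj1 : j1 ∉ J) (hσσ : σ j0 < σ j1)
    (γ : ℝ → Matrix (Fin dy) (Fin dx) ℝ)
    (hγ : γ = fun t : ℝ =>
      (σ j0 • Matrix.vecMulVec (t • u j1 + Real.sqrt (1 - t ^ 2) • u j0)
          (t • v j1 + Real.sqrt (1 - t ^ 2) • v j0) +
        ∑ j ∈ J.erase j0, σ j • Matrix.vecMulVec (u j) (v j)) * psdRpow hX.1 (-(1 / 2))) :
    deriv (deriv (fun t : ℝ => L1 X Y (γ t))) 0 = 2 * σ j0 * (σ j0 - σ j1) ∧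
      2 * σ j0 * (σ j0 - σ j1) < 0 := by
  have hj01 : j0 ≠ j1 := fun h => hj1 (h ▸ hj0)
  set P : Matrix (Fin dx) (Fin dx) ℝ := psdRpow hX.1 (-(1 / 2)) with hPdef
  have hP : Pᵀ = P := psdRpow_transpose hX.1 _
  have hPXP : P * (X * Xᵀ) * P = 1 := psdRpow_mul_mul hX
  set c : ℝ := σ j0 * (σ j0 - σ j1) with hcdef
  set C : ℝ := (1/2) * trace (Y * Yᵀ) - (1/2) * (σ j0)^2
      - (1/2) * ∑ j ∈ J.erase j0, (σ j)^2 with hCdef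
  have hf : ∀ t ∈ Set.Ioo (-1 : ℝ) 1, L1 X Y (γ t) = C + c * t^2 := by
    intro t ht
    have hs2 : Real.sqrt (1 - t^2) ^ 2 = 1 - t^2 :=
      Real.sq_sqrt (by nlinarith [ht.1, ht.2])
    set s : ℝ := Real.sqrt (1 - t^2) with hsdef
    set ut : Fin dy → ℝ := t • u j1 + s • u j0 with hut
    set vt : Fin dx → ℝ := t • v j1 + s • v j0 with hvt
    -- dot products
    have hutu : ∀ i, ut ⬝ᵥ u i
        = t * (if j1 = i then 1 else 0) + s * (if j0 = i then 1 else 0) := by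
      intro i
      rw [hut, add_dotProduct, smul_dotProduct, smul_dotProduct, hu, hu]
      simp [smul_eq_mul]
    have hvtv : ∀ i, vt ⬝ᵥ v i
        = t * (if j1 = i then 1 else 0) + s * (if j0 = i then 1 else 0) := by
      intro i
      rw [hvt, add_dotProduct, smul_dotProduct, smul_dotProduct, hv, hv]
      simp [smul_eq_mul]
    have hutu' : ∀ i, u i ⬝ᵥ ut
        = t * (if i = j1 then 1 else 0) + s * (if i = j0 then 1 else 0) := by
      intro i
      rw [hut, dotProduct_add, dotProduct_smul, dotProduct_smul, hu, hu]
      simp [smul_eq_mul]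
    have hvtv' : ∀ i, v i ⬝ᵥ vt
        = t * (if i = j1 then 1 else 0) + s * (if i = j0 then 1 else 0) := by
      intro i
      rw [hvt, dotProduct_add, dotProduct_smul, dotProduct_smul, hv, hv]
      simp [smul_eq_mul]
    have hutut : ut ⬝ᵥ ut = 1 := by
      rw [hut, dotProduct_add, dotProduct_smul, dotProduct_smul, add_dotProduct,
        add_dotProduct, smul_dotProduct, smul_dotProduct, smul_dotProduct, smul_dotProduct,
        hu, hu, hu, hu]
      simp [hj01, Ne.symm hj01, smul_eq_mul]
      nlinarith [hs2]
    have hvtvt : vt ⬝ᵥ vt = 1 := by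
      rw [hvt, dotProduct_add, dotProduct_smul, dotProduct_smul, add_dotProduct,
        add_dotProduct, smul_dotProduct, smul_dotProduct, smul_dotProduct, smul_dotProduct,
        hv, hv, hv, hv]
      simp [hj01, Ne.symm hj01, smul_eq_mul]
      nlinarith [hs2]
    -- the matrix A(t) as a sum over J
    classical
    set U : Fin q → Fin dy → ℝ := fun j => if j = j0 then ut else u j with hUdef
    set V : Fin q → Fin dx → ℝ := fun j => if j = j0 then vt else v j with hVdef
    set A : Matrix (Fin dy) (Fin dx) ℝ := ∑ j ∈ J, σ j • vecMulVec (U j) (V j) with hAdef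
    have hγt : γ t = A * P := by
      rw [hγ]
      simp only
      congr 1
      rw [hAdef, ← Finset.add_sum_erase _ _ hj0]
      congr 1
      · have h1 : U j0 = ut := if_pos rfl
        have h2 : V j0 = vt := if_pos rfl
        rw [h1, h2, hut, hvt]
      · refine (Finset.sum_congr rfl fun j hj => ?_).symm
        have hne : j ≠ j0 := Finset.ne_of_mem_erase hj
        rw [hUdef, hVdef]
        simp only [if_neg hne]
    -- the two traces
    have htr1 : trace (A * P * X * Yᵀ)
        = ∑ j ∈ J, ∑ i : Fin q, σ j * σ i * ((U j ⬝ᵥ u i) * (V j ⬝ᵥ v i)) := by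
      have h1 : A * P * X * Yᵀ = A * (∑ i : Fin q, σ i • vecMulVec (u i) (v i))ᵀ := by
        rw [← hQ, Matrix.transpose_mul, Matrix.transpose_mul, Matrix.transpose_transpose, hP]
        simp only [Matrix.mul_assoc]
      rw [h1, hAdef, trace_sum_mul_sum]
    have htr2 : trace (A * P * X * Xᵀ * (A * P)ᵀ)
        = ∑ j ∈ J, ∑ j' ∈ J, σ j * σ j' * ((U j ⬝ᵥ U j') * (V j ⬝ᵥ V j')) := by
      have h2 : A * P * X * Xᵀ * (A * P)ᵀ = A * Aᵀ := by
        rw [Matrix.transpose_mul, hP]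
        calc A * P * X * Xᵀ * (P * Aᵀ)
            = A * (P * (X * Xᵀ) * P) * Aᵀ := by simp only [Matrix.mul_assoc]
          _ = A * Aᵀ := by rw [hPXP, Matrix.mul_one]
      rw [h2, hAdef, trace_sum_mul_sum]
    -- evaluate sum 1
    have hsum1 : ∑ j ∈ J, ∑ i : Fin q, σ j * σ i * ((U j ⬝ᵥ u i) * (V j ⬝ᵥ v i))
        = (σ j0 * σ j1 * t^2 + (σ j0)^2 * s^2) + ∑ j ∈ J.erase j0, (σ j)^2 := by
      rw [← Finset.add_sum_erase _ _ hj0]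
      congr 1
      · have hterm : ∀ i, σ j0 * σ i * ((U j0 ⬝ᵥ u i) * (V j0 ⬝ᵥ v i))
            = (if j1 = i then σ j0 * σ j1 * t^2 else 0)
              + (if j0 = i then (σ j0)^2 * s^2 else 0) := by
          intro i
          have h1 : U j0 = ut := if_pos rfl
          have h2 : V j0 = vt := if_pos rfl
          rw [h1, h2, hutu, hvtv]
          by_cases hi1 : j1 = i
          · by_cases hi0 : j0 = i
            · exact absurd (hi0.trans hi1.symm) hj01
            · simp only [if_pos hi1, if_neg hi0]; rw [← hi1]; ring
          · by_cases hi0 : j0 = i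
            · simp only [if_neg hi1, if_pos hi0]; rw [← hi0]; ring
            · simp only [if_neg hi1, if_neg hi0]; ring
        rw [Finset.sum_congr rfl fun i _ => hterm i, Finset.sum_add_distrib,
          Finset.sum_ite_eq, Finset.sum_ite_eq]
        simp only [Finset.mem_univ, if_true]
      · refine Finset.sum_congr rfl fun j hj => ?_
        have hjne : j ≠ j0 := Finset.ne_of_mem_erase hj
        have h1 : U j = u j := if_neg hjne
        have h2 : V j = v j := if_neg hjne
        rw [h1, h2]
        have hterm : ∀ i, σ j * σ i * ((u j ⬝ᵥ u i) * (v j ⬝ᵥ v i))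
            = if j = i then (σ j)^2 else 0 := by
          intro i
          rw [hu, hv]
          by_cases h : j = i
          · simp only [if_pos h]; rw [h]; ring
          · simp only [if_neg h]; ring
        rw [Finset.sum_congr rfl fun i _ => hterm i, Finset.sum_ite_eq]
        simp only [Finset.mem_univ, if_true]
    -- evaluate sum 2
    have hsum2 : ∑ j ∈ J, ∑ j' ∈ J, σ j * σ j' * ((U j ⬝ᵥ U j') * (V j ⬝ᵥ V j'))
        = (σ j0)^2 + ∑ j ∈ J.erase j0, (σ j)^2 := by
      have hterm : ∀ j ∈ J, ∀ j' ∈ J, σ j * σ j' * ((U j ⬝ᵥ U j') * (V j ⬝ᵥ V j'))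
          = if j = j' then (σ j)^2 else 0 := by
        intro j hj j' hj'
        have hUj : ∀ x ∈ J, x ≠ j0 → U x = u x := fun x _ hx => if_neg hx
        have hVj : ∀ x ∈ J, x ≠ j0 → V x = v x := fun x _ hx => if_neg hx
        by_cases h : j = j'
        · subst h
          rw [if_pos rfl]
          by_cases h0 : j = j0
          · have h1 : U j = ut := if_pos h0
            have h2 : V j = vt := if_pos h0
            rw [h1, h2, hutut, hvtvt]; ring
          · rw [hUj j hj h0, hVj j hj h0, hu, hv, if_pos rfl]
            ring
        · rw [if_neg h]
          by_cases h0 : j = j0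
          · have hne : j' ≠ j0 := fun hh => h (h0.trans hh.symm)
            have hne1 : j' ≠ j1 := fun hh => hj1 (hh ▸ hj')
            have h1 : U j = ut := if_pos h0
            have h2 : V j = vt := if_pos h0
            rw [h1, h2, hUj j' hj' hne, hVj j' hj' hne]
            have hne' : j1 ≠ j' := fun hh : j1 = j' => hne1 hh.symm
            have hne'' : j0 ≠ j' := fun hh : j0 = j' => hne hh.symm
            have hud : ut ⬝ᵥ u j' = 0 := by
              rw [hutu]
              simp only [if_neg hne', if_neg hne'']; ring
            have hvd : vt ⬝ᵥ v j' = 0 := by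
              rw [hvtv]
              simp only [if_neg hne', if_neg hne'']; ring
            rw [hud, hvd]; ring
          · by_cases h0' : j' = j0
            · have hne1 : j ≠ j1 := fun hh => hj1 (hh ▸ hj)
              have h1 : U j' = ut := if_pos h0'
              have h2 : V j' = vt := if_pos h0'
              rw [hUj j hj h0, hVj j hj h0, h1, h2]
              have hud : u j ⬝ᵥ ut = 0 := by
                rw [hutu']
                simp only [if_neg hne1, if_neg h0]; ring
              have hvd : v j ⬝ᵥ vt = 0 := by
                rw [hvtv']
                simp only [if_neg hne1, if_neg h0]; ring
              rw [hud, hvd]; ring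
            · rw [hUj j hj h0, hVj j hj h0, hUj j' hj' h0', hVj j' hj' h0', hu, hv]
              simp only [if_neg h]; ring
      calc ∑ j ∈ J, ∑ j' ∈ J, σ j * σ j' * ((U j ⬝ᵥ U j') * (V j ⬝ᵥ V j'))
          = ∑ j ∈ J, ∑ j' ∈ J, (if j = j' then (σ j)^2 else 0) :=
            Finset.sum_congr rfl fun j hj =>
              Finset.sum_congr rfl fun j' hj' => hterm j hj j' hj'
        _ = ∑ j ∈ J, (σ j)^2 := by
            refine Finset.sum_congr rfl fun j hj => ?_
            rw [Finset.sum_ite_eq, if_pos hj]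
        _ = (σ j0)^2 + ∑ j ∈ J.erase j0, (σ j)^2 := (Finset.add_sum_erase _ _ hj0).symm
    -- assemble
    rw [hγt, L1_expand, htr1, htr2, hsum1, hsum2, hCdef, hcdef]
    have hss : s^2 = 1 - t^2 := hs2
    rw [hss]
    ring
  -- calculus
  have hev : (fun t : ℝ => L1 X Y (γ t)) =ᶠ[nhds 0] fun t : ℝ => C + c * t^2 := by
    filter_upwards [Ioo_mem_nhds (by norm_num : (-1:ℝ) < 0) (by norm_num : (0:ℝ) < 1)] with t ht
    exact hf t ht
  have hd1 : deriv (fun t : ℝ => C + c * t^2) = fun t : ℝ => c * (2 * t) := by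
    funext t
    have h : HasDerivAt (fun t : ℝ => C + c * t^2) (c * (2 * t)) t := by
      simpa using ((hasDerivAt_pow 2 t).const_mul c).const_add C
    exact h.deriv
  have hder : deriv (deriv (fun t : ℝ => L1 X Y (γ t))) 0
      = deriv (deriv (fun t : ℝ => C + c * t^2)) 0 := (hev.deriv).deriv_eq
  have hd2 : deriv (deriv (fun t : ℝ => C + c * t^2)) 0 = 2 * c := by
    rw [hd1]
    have h : HasDerivAt (fun t : ℝ => c * (2 * t)) (2 * c) 0 := by
      have := (hasDerivAt_id (0:ℝ)).const_mul (c * 2)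
      simpa [mul_comm, mul_assoc, mul_left_comm] using this
    exact h.deriv
  constructor
  · rw [hder, hd2, hcdef]; ring
  · have h1 : 0 < σ j0 := hσpos j0
    nlinarith [hσσ, h1]
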